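/- arXiv:2109.10885 — 6 statements merged into one kernel-verified Lean document; each statement's English description precedes it below -/
import Mathlib

section
/- For any basis v_1,...,v_n of R^n, let v_0 = -(v_1+...+v_n) and define conorms p_{ij} = -v_i·v_j for 0 ≤ i < j ≤ n. Then for any vector v = Σ_{i=1}^n c_i v_i with real coefficients c_i, the squared norm satisfies v·v = Σ_{i=1}^n c_i^2 p_{0i} + Σ_{1≤i<j≤n} (c_i - c_j)^2 p_{ij}. -/
open RealInnerProductSpace Finset

lemma swap_Iio_Ioi (n : ℕ) (E : Fin n → Fin n → ℝ) :
    ∑ i, ∑ j ∈ Finset.Iio i, E i j = ∑ i, ∑ j ∈ Finset.Ioi i, E j i := by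
  rw [Finset.sum_sigma', Finset.sum_sigma']
  refine Finset.sum_nbij' (fun p => ⟨p.2, p.1⟩) (fun p => ⟨p.2, p.1⟩) ?_ ?_ ?_ ?_ ?_ <;>
    simp [Finset.mem_Iio, Finset.mem_Ioi]

lemma univ_split (n : ℕ) (i : Fin n) (F : Fin n → ℝ) :
    ∑ j, F j = (∑ j ∈ Finset.Iio i, F j) + (F i + ∑ j ∈ Finset.Ioi i, F j) := by
  have hu : Finset.Iio i ∪ Finset.Ici i = Finset.univ := by
    ext j; simp [lt_or_ge]
  have hd : Disjoint (Finset.Iio i) (Finset.Ici i) := by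
    simp [Finset.disjoint_left]
  rw [← hu, Finset.sum_union hd, Finset.Ici_eq_cons_Ioi, Finset.sum_cons]

lemma key_sum (n : ℕ) (g : Fin n → Fin n → ℝ) (hg : ∀ i j, g i j = g j i) (c : Fin n → ℝ) :
    ∑ i, ∑ j, c i * c j * g i j =
      (∑ i, c i ^ 2 * (∑ j, g j i)) +
      ∑ i, ∑ j ∈ Finset.Ioi i, (c i - c j) ^ 2 * (-(g i j)) := by
  set E : Fin n → Fin n → ℝ := fun i j => c i * c j * g i j - c j ^ 2 * g i j with hE
  have h2 : ∑ i, c i ^ 2 * (∑ j, g j i) = ∑ i, ∑ j, c j ^ 2 * g i j := by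
    rw [Finset.sum_comm]
    exact Finset.sum_congr rfl fun i _ => by rw [Finset.mul_sum]
  rw [h2, ← sub_eq_iff_eq_add']
  rw [← Finset.sum_sub_distrib]
  simp_rw [← Finset.sum_sub_distrib]
  have hEE : ∀ i j, (c i - c j) ^ 2 * (-(g i j)) = E i j + E j i := by
    intro i j; simp only [hE]; rw [hg j i]; ring
  simp_rw [hEE]
  show (∑ i, ∑ j, E i j) = ∑ i, ∑ j ∈ Finset.Ioi i, (E i j + E j i)
  simp_rw [Finset.sum_add_distrib]
  rw [Finset.sum_congr rfl (fun i _ => univ_split n i (fun j => E i j))]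
  rw [Finset.sum_add_distrib, swap_Iio_Ioi]
  have : ∀ i : Fin n, E i i + ∑ j ∈ Finset.Ioi i, E i j = ∑ j ∈ Finset.Ioi i, E i j := by
    intro i
    have h0 : E i i = 0 := by simp only [hE]; ring
    rw [h0, zero_add]
  simp_rw [this]
  ring

/-- Squared norm formula via conorms of a superbase. -/
theorem squared_norm_formula (n : ℕ) (v : Fin n → EuclideanSpace ℝ (Fin n))
    (hv : LinearIndependent ℝ v) (c : Fin n → ℝ) :
    let v₀ : EuclideanSpace ℝ (Fin n) := -∑ i, v i
    let p : Fin n → Fin n → ℝ := fun i j => -⟪v i, v j⟫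
    let p₀ : Fin n → ℝ := fun i => -⟪v₀, v i⟫
    ⟪∑ i, c i • v i, ∑ i, c i • v i⟫ =
      (∑ i, (c i) ^ 2 * p₀ i) +
      ∑ i, ∑ j ∈ Finset.Ioi i, (c i - c j) ^ 2 * p i j := by
  intro v₀ p p₀
  have hL : ⟪∑ i, c i • v i, ∑ i, c i • v i⟫ = ∑ i, ∑ j, c i * c j * ⟪v i, v j⟫ := by
    rw [sum_inner]
    refine Finset.sum_congr rfl fun i _ => ?_
    rw [inner_sum]
    refine Finset.sum_congr rfl fun j _ => ?_
    rw [real_inner_smul_left, real_inner_smul_right]; ring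
  have hp₀ : ∀ i, p₀ i = ∑ j, ⟪v j, v i⟫ := by
    intro i
    simp only [p₀, v₀, inner_neg_left, neg_neg, sum_inner]
  simp only [hL, hp₀, p]
  exact key_sum n (fun i j => ⟪v i, v j⟫) (fun i j => real_inner_comm _ _) c
end

section
/- Let v_0, v_1, v_2 be a superbase in R^2 (v_0+v_1+v_2=0) with p_{12} = -v_1·v_2 = -ε < 0 (i.e., v_1·v_2 = ε > 0). Define the new superbase u_1 = -v_1, u_2 = v_2, u_0 = v_1 - v_2. Then u_0 + u_1 + u_2 = 0, u_1² = v_1², u_2² = v_2², u_0² = v_0² - 4ε, and the new conorms satisfy q_{12} = -u_1·u_2 = ε, q_{01} = -u_0·u_1 = p_{01} - 2ε, q_{02} = -u_0·u_2 = p_{02} - 2ε. -/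
open RealInnerProductSpace

/-- One reduction step for a 2D superbase with a negative conorm. -/
theorem superbase_reduction_step (v₀ v₁ v₂ : EuclideanSpace ℝ (Fin 2))
    (hsum : v₀ + v₁ + v₂ = 0) (ε : ℝ) (hε : ⟪v₁, v₂⟫ = ε) (hpos : 0 < ε) :
    let u₁ := -v₁
    let u₂ := v₂
    let u₀ := v₁ - v₂
    u₀ + u₁ + u₂ = 0 ∧
    ⟪u₁, u₁⟫ = ⟪v₁, v₁⟫ ∧
    ⟪u₂, u₂⟫ = ⟪v₂, v₂⟫ ∧
    ⟪u₀, u₀⟫ = ⟪v₀, v₀⟫ - 4 * ε ∧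
    -⟪u₁, u₂⟫ = ε ∧
    -⟪u₀, u₁⟫ = -⟪v₀, v₁⟫ - 2 * ε ∧
    -⟪u₀, u₂⟫ = -⟪v₀, v₂⟫ - 2 * ε := by
  have hv0 : v₀ = -v₁ - v₂ := by
    have := hsum; linear_combination (norm := abel_nf) this
  subst hv0
  have hc : ⟪v₂, v₁⟫ = ε := by rw [real_inner_comm]; exact hε
  refine ⟨by abel, ?_, ?_, ?_, ?_, ?_, ?_⟩ <;>
    simp only [inner_sub_left, inner_sub_right, inner_add_left, inner_add_right,
      inner_neg_left, inner_neg_right, hε, hc] <;> ring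
end

section
/- Every lattice in R^2 has an obtuse superbase: for any two linearly independent vectors w_1, w_2 in R^2, the lattice they generate admits a basis v_1, v_2 such that, setting v_0 = -v_1 - v_2, all three pairwise scalar products satisfy v_i · v_j ≤ 0 for distinct i, j in {0,1,2}. -/
open RealInnerProductSpace

private noncomputable abbrev E2 := EuclideanSpace ℝ (Fin 2)

private lemma g_neg (u v : E2) :
    ⟪u, u⟫ + ⟪-v, -v⟫ + ⟪u + -v, u + -v⟫
      = (⟪u, u⟫ + ⟪v, v⟫ + ⟪u + v, u + v⟫) - 4 * ⟪u, v⟫ := by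
  simp only [inner_add_left, inner_add_right, inner_neg_left, inner_neg_right]
  rw [real_inner_comm v u]; ring

private lemma g_move2 (u v : E2) :
    ⟪u, u⟫ + ⟪-((2:ℝ)•u) - v, -((2:ℝ)•u) - v⟫ + ⟪u + (-((2:ℝ)•u) - v), u + (-((2:ℝ)•u) - v)⟫
      = (⟪u, u⟫ + ⟪v, v⟫ + ⟪u + v, u + v⟫) - 4 * ⟪-u - v, u⟫ := by
  simp only [inner_add_left, inner_add_right, inner_sub_left, inner_sub_right,
    inner_neg_left, inner_neg_right, real_inner_smul_left, real_inner_smul_right]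
  rw [real_inner_comm v u]; ring

private lemma g_move3 (u v : E2) :
    ⟪-u - (2:ℝ)•v, -u - (2:ℝ)•v⟫ + ⟪v, v⟫ + ⟪(-u - (2:ℝ)•v) + v, (-u - (2:ℝ)•v) + v⟫
      = (⟪u, u⟫ + ⟪v, v⟫ + ⟪u + v, u + v⟫) - 4 * ⟪-u - v, v⟫ := by
  simp only [inner_add_left, inner_add_right, inner_sub_left, inner_sub_right,
    inner_neg_left, inner_neg_right, real_inner_smul_left, real_inner_smul_right]
  rw [real_inner_comm v u]; ring

private lemma span_unimodular (w₁ w₂ : E2) (a b c d : ℤ)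
    (h : a * d - b * c = 1 ∨ a * d - b * c = -1) :
    Submodule.span ℤ ({(a:ℝ) • w₁ + (b:ℝ) • w₂, (c:ℝ) • w₁ + (d:ℝ) • w₂} : Set E2) =
      Submodule.span ℤ ({w₁, w₂} : Set E2) := by
  have hw1 : w₁ ∈ Submodule.span ℤ ({w₁, w₂} : Set E2) :=
    Submodule.subset_span (by simp)
  have hw2 : w₂ ∈ Submodule.span ℤ ({w₁, w₂} : Set E2) :=
    Submodule.subset_span (by simp)
  have hv1 : (a:ℝ) • w₁ + (b:ℝ) • w₂ ∈
      Submodule.span ℤ ({(a:ℝ) • w₁ + (b:ℝ) • w₂, (c:ℝ) • w₁ + (d:ℝ) • w₂} : Set E2) :=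
    Submodule.subset_span (by simp)
  have hv2 : (c:ℝ) • w₁ + (d:ℝ) • w₂ ∈
      Submodule.span ℤ ({(a:ℝ) • w₁ + (b:ℝ) • w₂, (c:ℝ) • w₁ + (d:ℝ) • w₂} : Set E2) :=
    Submodule.subset_span (by simp)
  apply le_antisymm
  · rw [Submodule.span_le]
    rintro x (rfl | rfl) <;> simp only [SetLike.mem_coe]
    · rw [Int.cast_smul_eq_zsmul ℝ, Int.cast_smul_eq_zsmul ℝ]
      exact Submodule.add_mem _ (Submodule.smul_mem _ a hw1) (Submodule.smul_mem _ b hw2)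
    · rw [Int.cast_smul_eq_zsmul ℝ, Int.cast_smul_eq_zsmul ℝ]
      exact Submodule.add_mem _ (Submodule.smul_mem _ c hw1) (Submodule.smul_mem _ d hw2)
  · rw [Submodule.span_le]
    have e1 : ((a*d - b*c : ℤ) : ℝ) • w₁
        = d • ((a:ℝ) • w₁ + (b:ℝ) • w₂) - b • ((c:ℝ) • w₁ + (d:ℝ) • w₂) := by
      rw [← Int.cast_smul_eq_zsmul ℝ d, ← Int.cast_smul_eq_zsmul ℝ b]
      push_cast; module
    have e2 : ((a*d - b*c : ℤ) : ℝ) • w₂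
        = a • ((c:ℝ) • w₁ + (d:ℝ) • w₂) - c • ((a:ℝ) • w₁ + (b:ℝ) • w₂) := by
      rw [← Int.cast_smul_eq_zsmul ℝ a, ← Int.cast_smul_eq_zsmul ℝ c]
      push_cast; module
    have m1 : ((a*d - b*c : ℤ) : ℝ) • w₁ ∈
        Submodule.span ℤ ({(a:ℝ) • w₁ + (b:ℝ) • w₂, (c:ℝ) • w₁ + (d:ℝ) • w₂} : Set E2) := by
      rw [e1]
      exact Submodule.sub_mem _ (Submodule.smul_mem _ d hv1) (Submodule.smul_mem _ b hv2)
    have m2 : ((a*d - b*c : ℤ) : ℝ) • w₂ ∈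
        Submodule.span ℤ ({(a:ℝ) • w₁ + (b:ℝ) • w₂, (c:ℝ) • w₁ + (d:ℝ) • w₂} : Set E2) := by
      rw [e2]
      exact Submodule.sub_mem _ (Submodule.smul_mem _ a hv2) (Submodule.smul_mem _ c hv1)
    rintro x (rfl | rfl) <;> simp only [SetLike.mem_coe]
    · rcases h with h | h <;> rw [h] at m1
      · simpa using m1
      · have := Submodule.neg_mem _ m1
        simpa using this
    · rcases h with h | h <;> rw [h] at m2
      · simpa using m2
      · have := Submodule.neg_mem _ m2
        simpa using this

/-- Every 2D lattice has an obtuse superbase. -/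
theorem exists_obtuse_superbase (w₁ w₂ : EuclideanSpace ℝ (Fin 2))
    (hw : LinearIndependent ℝ ![w₁, w₂]) :
    ∃ v₁ v₂ : EuclideanSpace ℝ (Fin 2),
      Submodule.span ℤ ({v₁, v₂} : Set (EuclideanSpace ℝ (Fin 2))) =
        Submodule.span ℤ ({w₁, w₂} : Set (EuclideanSpace ℝ (Fin 2))) ∧
      (let v₀ := -v₁ - v₂
       ⟪v₁, v₂⟫ ≤ 0 ∧ ⟪v₀, v₁⟫ ≤ 0 ∧ ⟪v₀, v₂⟫ ≤ 0) := by
  classical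
  have hcard : Fintype.card (Fin 2) = Module.finrank ℝ (EuclideanSpace ℝ (Fin 2)) := by
    simp [finrank_euclideanSpace]
  let B := basisOfLinearIndependentOfCardEqFinrank hw hcard
  have hB : ⇑B = ![w₁, w₂] := coe_basisOfLinearIndependentOfCardEqFinrank hw hcard
  have hB0 : B 0 = w₁ := by rw [hB]; rfl
  have hB1 : B 1 = w₂ := by rw [hB]; rfl
  let φ : Fin 2 → (EuclideanSpace ℝ (Fin 2)) →L[ℝ] ℝ :=
    fun i => LinearMap.toContinuousLinearMap (B.coord i)
  have hcoord : ∀ (p q : ℝ), φ 0 ((p • w₁ + q • w₂ : E2)) = p ∧ φ 1 ((p • w₁ + q • w₂ : E2)) = q := by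
    intro p q
    have h : ∀ i, φ i ((p • w₁ + q • w₂ : E2)) = p * B.coord i w₁ + q * B.coord i w₂ := by
      intro i; simp [φ, map_add, map_smul]
    rw [h, h, ← hB0, ← hB1]
    simp [Module.Basis.coord_apply, Module.Basis.repr_self]
  -- setup
  set V1 : ℤ × ℤ × ℤ × ℤ → E2 :=
    fun x => (x.1:ℝ) • w₁ + (x.2.1:ℝ) • w₂ with hV1
  set V2 : ℤ × ℤ × ℤ × ℤ → E2 :=
    fun x => (x.2.2.1:ℝ) • w₁ + (x.2.2.2:ℝ) • w₂ with hV2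
  set f : ℤ × ℤ × ℤ × ℤ → ℝ :=
    fun x => ⟪V1 x, V1 x⟫ + ⟪V2 x, V2 x⟫ + ⟪V1 x + V2 x, V1 x + V2 x⟫ with hf
  set S : Set (ℤ × ℤ × ℤ × ℤ) :=
    {x | x.1 * x.2.2.2 - x.2.1 * x.2.2.1 = 1 ∨ x.1 * x.2.2.2 - x.2.1 * x.2.2.1 = -1} with hS
  have hx0 : ((1,0,0,1) : ℤ × ℤ × ℤ × ℤ) ∈ S := by left; norm_num [hS]
  set F0 : ℝ := f (1,0,0,1) with hF0
  have hself : ∀ v : E2, (0:ℝ) ≤ ⟪v, v⟫ := fun v => real_inner_self_nonneg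
  set T : Set (ℤ × ℤ × ℤ × ℤ) := {x ∈ S | f x ≤ F0} with hT
  set C : ℝ := max ‖φ 0‖ ‖φ 1‖ + 1 with hC
  have hCpos : 0 < C := by positivity
  set M : ℤ := ⌈C * Real.sqrt F0⌉ with hM
  -- T is finite
  have hTfin : T.Finite := by
    apply (Set.finite_Icc ((-M, -M, -M, -M) : ℤ × ℤ × ℤ × ℤ) (M, M, M, M)).subset
    rintro ⟨a, b, c, d⟩ ⟨-, hfx⟩
    have hbd : ∀ (p q : ℤ), ⟪((p:ℝ) • w₁ + (q:ℝ) • w₂ : E2), ((p:ℝ) • w₁ + (q:ℝ) • w₂ : E2)⟫ ≤ F0 →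
        -M ≤ p ∧ p ≤ M ∧ -M ≤ q ∧ q ≤ M := by
      intro p q hpq
      set v : E2 := (p:ℝ) • w₁ + (q:ℝ) • w₂ with hv
      have hnv : ‖v‖ ≤ Real.sqrt F0 := by
        calc ‖v‖ = Real.sqrt (‖v‖ ^ 2) := (Real.sqrt_sq (norm_nonneg v)).symm
          _ ≤ Real.sqrt F0 := Real.sqrt_le_sqrt (by rw [← real_inner_self_eq_norm_sq]; exact hpq)
      have hb : ∀ i : Fin 2, ‖φ i v‖ ≤ C * Real.sqrt F0 := by
        intro i
        calc ‖φ i v‖ ≤ ‖φ i‖ * ‖v‖ := (φ i).le_opNorm v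
          _ ≤ C * Real.sqrt F0 := by
            apply mul_le_mul _ hnv (norm_nonneg v) (le_of_lt hCpos)
            rw [hC]
            have hle : ‖φ i‖ ≤ max ‖φ 0‖ ‖φ 1‖ := by
              fin_cases i
              exacts [le_max_left _ _, le_max_right _ _]
            linarith
      have hMc : (C * Real.sqrt F0) ≤ (M:ℝ) := Int.le_ceil _
      have hp : |(p:ℝ)| ≤ (M:ℝ) := by
        have h1 : φ 0 v = p := (hcoord p q).1
        have := hb 0; rw [h1] at this
        simp only [Real.norm_eq_abs] at this; linarith
      have hq : |(q:ℝ)| ≤ (M:ℝ) := by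
        have h1 : φ 1 v = q := (hcoord p q).2
        have := hb 1; rw [h1] at this
        simp only [Real.norm_eq_abs] at this; linarith
      rw [abs_le] at hp hq
      refine ⟨?_, ?_, ?_, ?_⟩
      · exact_mod_cast (show ((-M:ℤ):ℝ) ≤ (p:ℝ) by push_cast; linarith [hp.1])
      · exact_mod_cast hp.2
      · exact_mod_cast (show ((-M:ℤ):ℝ) ≤ (q:ℝ) by push_cast; linarith [hq.1])
      · exact_mod_cast hq.2
    simp only [hf] at hfx
    have h1 : ⟪V1 (a,b,c,d), V1 (a,b,c,d)⟫ ≤ F0 := by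
      have := hself (V2 (a,b,c,d)); have := hself (V1 (a,b,c,d) + V2 (a,b,c,d)); linarith
    have h2 : ⟪V2 (a,b,c,d), V2 (a,b,c,d)⟫ ≤ F0 := by
      have := hself (V1 (a,b,c,d)); have := hself (V1 (a,b,c,d) + V2 (a,b,c,d)); linarith
    obtain ⟨ha1, ha2, hb1, hb2⟩ := hbd a b h1
    obtain ⟨hc1, hc2, hd1, hd2⟩ := hbd c d h2
    simp only [Set.mem_Icc, Prod.mk_le_mk]
    exact ⟨⟨ha1, hb1, hc1, hd1⟩, ha2, hb2, hc2, hd2⟩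
  -- minimizer
  obtain ⟨x, hxT, hxmin⟩ := Set.exists_min_image T f hTfin ⟨(1,0,0,1), hx0, le_refl F0⟩
  have hxS : x ∈ S := hxT.1
  have hmin : ∀ y ∈ S, f x ≤ f y := by
    intro y hy
    by_cases hyT : f y ≤ F0
    · exact hxmin y ⟨hy, hyT⟩
    · exact le_trans hxT.2 (le_of_not_ge hyT)
  obtain ⟨a, b, c, d⟩ := x
  have hdet : a * d - b * c = 1 ∨ a * d - b * c = -1 := hxS
  refine ⟨V1 (a,b,c,d), V2 (a,b,c,d), ?_, ?_, ?_, ?_⟩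
  · exact span_unimodular w₁ w₂ a b c d hdet
  -- move 1 : v₂ ↦ -v₂
  · have hyS : ((a, b, -c, -d) : ℤ × ℤ × ℤ × ℤ) ∈ S := by
      rcases hdet with h | h
      · right; show a * (-d) - b * (-c) = -1; linarith
      · left; show a * (-d) - b * (-c) = 1; linarith
    have hV1y : V1 (a, b, -c, -d) = V1 (a,b,c,d) := rfl
    have hV2y : V2 (a, b, -c, -d) = -(V2 (a,b,c,d)) := by
      simp only [hV2]; push_cast; module
    have := hmin _ hyS
    simp only [hf, hV1y, hV2y] at this
    rw [g_neg (V1 (a,b,c,d)) (V2 (a,b,c,d))] at this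
    linarith
  -- move 2 : v₂ ↦ -2v₁ - v₂
  · have hyS : ((a, b, -2*a - c, -2*b - d) : ℤ × ℤ × ℤ × ℤ) ∈ S := by
      rcases hdet with h | h
      · right; show a * (-2*b - d) - b * (-2*a - c) = -1; linarith
      · left; show a * (-2*b - d) - b * (-2*a - c) = 1; linarith
    have hV1y : V1 (a, b, -2*a - c, -2*b - d) = V1 (a,b,c,d) := rfl
    have hV2y : V2 (a, b, -2*a - c, -2*b - d) = -((2:ℝ) • V1 (a,b,c,d)) - V2 (a,b,c,d) := by
      simp only [hV1, hV2]; push_cast; module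
    have := hmin _ hyS
    simp only [hf, hV1y, hV2y] at this
    rw [g_move2 (V1 (a,b,c,d)) (V2 (a,b,c,d))] at this
    linarith
  -- move 3 : v₁ ↦ -v₁ - 2v₂
  · have hyS : ((-a - 2*c, -b - 2*d, c, d) : ℤ × ℤ × ℤ × ℤ) ∈ S := by
      rcases hdet with h | h
      · right; show (-a - 2*c) * d - (-b - 2*d) * c = -1; linarith
      · left; show (-a - 2*c) * d - (-b - 2*d) * c = 1; linarith
    have hV2y : V2 (-a - 2*c, -b - 2*d, c, d) = V2 (a,b,c,d) := rfl
    have hV1y : V1 (-a - 2*c, -b - 2*d, c, d) = -(V1 (a,b,c,d)) - (2:ℝ) • V2 (a,b,c,d) := by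
      simp only [hV1, hV2]; push_cast; module
    have := hmin _ hyS
    simp only [hf, hV1y, hV2y] at this
    rw [g_move3 (V1 (a,b,c,d)) (V2 (a,b,c,d))] at this
    linarith
end

section
/- Let u_1, u_2, v_1, v_2 be vectors in R^n each of Euclidean length at most l, with u_1·u_2 ≤ 0 and v_1·v_2 ≤ 0, and |u_i - v_i| ≤ δ for i = 1, 2. Then |√(-u_1·u_2) - √(-v_1·v_2)| ≤ √(2lδ). -/
open RealInnerProductSpace

lemma sqrt_sub_sqrt_abs_le (a b : ℝ) (ha : 0 ≤ a) (hb : 0 ≤ b) :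
    |Real.sqrt a - Real.sqrt b| ≤ Real.sqrt |a - b| := by
  wlog h : b ≤ a generalizing a b
  · rw [abs_sub_comm, abs_sub_comm a b]; exact this b a hb ha (le_of_not_ge h)
  rw [abs_of_nonneg (sub_nonneg.2 (Real.sqrt_le_sqrt h)), abs_of_nonneg (sub_nonneg.2 h)]
  rw [sub_le_iff_le_add]
  have : a ≤ (Real.sqrt (a - b) + Real.sqrt b) ^ 2 := by
    have h1 := Real.sq_sqrt (sub_nonneg.2 h)
    have h2 := Real.sq_sqrt hb
    have h3 : 0 ≤ Real.sqrt (a - b) * Real.sqrt b :=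
      mul_nonneg (Real.sqrt_nonneg _) (Real.sqrt_nonneg _)
    nlinarith
  calc Real.sqrt a ≤ Real.sqrt ((Real.sqrt (a - b) + Real.sqrt b) ^ 2) :=
        Real.sqrt_le_sqrt this
    _ = Real.sqrt (a - b) + Real.sqrt b := by
        rw [Real.sqrt_sq (by positivity)]

/-- Continuity of root products. -/
theorem root_product_continuity (n : ℕ) (u₁ u₂ v₁ v₂ : EuclideanSpace ℝ (Fin n))
    (l δ : ℝ)
    (hu₁ : ‖u₁‖ ≤ l) (hu₂ : ‖u₂‖ ≤ l) (hv₁ : ‖v₁‖ ≤ l) (hv₂ : ‖v₂‖ ≤ l)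
    (hu : ⟪u₁, u₂⟫ ≤ 0) (hv : ⟪v₁, v₂⟫ ≤ 0)
    (hd₁ : ‖u₁ - v₁‖ ≤ δ) (hd₂ : ‖u₂ - v₂‖ ≤ δ) :
    |Real.sqrt (-⟪u₁, u₂⟫) - Real.sqrt (-⟪v₁, v₂⟫)| ≤ Real.sqrt (2 * l * δ) := by
  have key : |(-⟪u₁, u₂⟫) - (-⟪v₁, v₂⟫)| ≤ 2 * l * δ := by
    have e : (-⟪u₁, u₂⟫) - (-⟪v₁, v₂⟫) = -(⟪u₁ - v₁, u₂⟫ + ⟪v₁, u₂ - v₂⟫) := by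
      rw [inner_sub_left, inner_sub_right]; ring
    rw [e, abs_neg]
    have h1 : |⟪u₁ - v₁, u₂⟫| ≤ ‖u₁ - v₁‖ * ‖u₂‖ := abs_real_inner_le_norm _ _
    have h2 : |⟪v₁, u₂ - v₂⟫| ≤ ‖v₁‖ * ‖u₂ - v₂‖ := abs_real_inner_le_norm _ _
    have hδ : 0 ≤ δ := le_trans (norm_nonneg _) hd₁
    have hl : 0 ≤ l := le_trans (norm_nonneg _) hu₁
    calc |⟪u₁ - v₁, u₂⟫ + ⟪v₁, u₂ - v₂⟫| ≤ |⟪u₁ - v₁, u₂⟫| + |⟪v₁, u₂ - v₂⟫| :=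
          abs_add_le _ _
      _ ≤ ‖u₁ - v₁‖ * ‖u₂‖ + ‖v₁‖ * ‖u₂ - v₂‖ := add_le_add h1 h2
      _ ≤ δ * l + l * δ := by
          gcongr <;> first | exact norm_nonneg _ | assumption
      _ = 2 * l * δ := by ring
  calc |Real.sqrt (-⟪u₁, u₂⟫) - Real.sqrt (-⟪v₁, v₂⟫)|
      ≤ Real.sqrt |(-⟪u₁, u₂⟫) - (-⟪v₁, v₂⟫)| :=
        sqrt_sub_sqrt_abs_le _ _ (neg_nonneg.2 hu) (neg_nonneg.2 hv)
    _ ≤ Real.sqrt (2 * l * δ) := Real.sqrt_le_sqrt key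
end

section
/- A lattice Λ in R^2 generated by v_1, v_2 and a lattice Λ' generated by u_1, u_2 are related by a linear isometry (orthogonal map) if there is an orthogonal map R of R^2 with R(v_1) = u_1 and R(v_2) = u_2; conversely, given obtuse superbases (v_0,v_1,v_2) of Λ and (u_0,u_1,u_2) of Λ' with equal vonorms v_i² = u_i² for i = 0,1,2, there exists an orthogonal map R of R^2 with R(v_i) = ±u_i (up to a common permutation/sign), hence Λ and Λ' are isometric. -/
/-!
Since `v₀ = -(v₁ + v₂)`, polarization gives `2⟪v₁, v₂⟫ = v₀² - v₁² - v₂²`, so the three vonorms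
determine the Gram matrix of the basis `(v₁, v₂)`. The linear map sending `vᵢ ↦ uᵢ` (i = 1, 2) then
preserves inner products, hence is orthogonal, and it also sends `v₀ ↦ u₀`; so `ε = 1` and `σ = id`
work. A linear map carrying generators to generators carries the `ℤ`-span onto the `ℤ`-span.
-/

open RealInnerProductSpace

theorem image_span_int {E F G : Type*} [AddCommGroup E] [AddCommGroup F] [FunLike G E F]
    [AddMonoidHomClass G E F] (f : G) (s : Set E) :
    f '' (Submodule.span ℤ s : Set E) = Submodule.span ℤ (f '' s) := by
  simpa using congrArg SetLike.coe (Submodule.map_span (f : E →+ F).toIntLinearMap s)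

theorem Module.Basis.exists_linearIsometry_of_inner_eq {ι 𝕜 E F : Type*} [RCLike 𝕜]
    [NormedAddCommGroup E] [InnerProductSpace 𝕜 E] [NormedAddCommGroup F] [InnerProductSpace 𝕜 F]
    (b : Module.Basis ι 𝕜 E) (c : ι → F) (h : ∀ i j, inner 𝕜 (b i) (b j) = inner 𝕜 (c i) (c j)) :
    ∃ f : E →ₗᵢ[𝕜] F, ∀ i, f (b i) = c i := by
  set g := b.constr 𝕜 c
  have hg : ∀ i, g (b i) = c i := b.constr_basis 𝕜 c
  have hinner : ((innerₛₗ 𝕜).comp g).compl₂ g = innerₛₗ 𝕜 :=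
    LinearMap.ext_basis b b fun i j => by simp [hg, h]
  exact ⟨g.isometryOfInner fun x y => congr($hinner x y), hg⟩

theorem exists_linearIsometryEquiv_of_inner_eq {ι 𝕜 E : Type*} [Fintype ι] [RCLike 𝕜]
    [NormedAddCommGroup E] [InnerProductSpace 𝕜 E] [FiniteDimensional 𝕜 E]
    {v : ι → E} (hv : LinearIndependent 𝕜 v) (hcard : Fintype.card ι = Module.finrank 𝕜 E)
    (u : ι → E) (h : ∀ i j, inner 𝕜 (v i) (v j) = inner 𝕜 (u i) (u j)) :
    ∃ R : E ≃ₗᵢ[𝕜] E, ∀ i, R (v i) = u i := by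
  let b := basisOfLinearIndependentOfCardEqFinrank' v hv hcard
  obtain ⟨f, hf⟩ := b.exists_linearIsometry_of_inner_eq u (by simpa [b] using h)
  exact ⟨f.toLinearIsometryEquiv rfl, by simpa [b] using hf⟩

theorem real_inner_eq_of_inner_self_neg_sub_eq {E : Type*} [NormedAddCommGroup E]
    [InnerProductSpace ℝ E] {a b c d : E} (ha : ⟪a, a⟫ = ⟪c, c⟫) (hb : ⟪b, b⟫ = ⟪d, d⟫)
    (hab : ⟪-a - b, -a - b⟫ = ⟪-c - d, -c - d⟫) : ⟪a, b⟫ = ⟪c, d⟫ := by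
  rw [← neg_add', ← neg_add', inner_neg_neg, inner_neg_neg, real_inner_add_add_self,
    real_inner_add_add_self] at hab
  linarith

theorem lattice_isometry_of_superbases_general
    (v u : Fin 3 → EuclideanSpace ℝ (Fin 2))
    (hv0 : v 0 = -v 1 - v 2) (hu0 : u 0 = -u 1 - u 2)
    (hvind : LinearIndependent ℝ ![v 1, v 2]) :
    (∀ R : EuclideanSpace ℝ (Fin 2) ≃ₗᵢ[ℝ] EuclideanSpace ℝ (Fin 2),
      R (v 1) = u 1 → R (v 2) = u 2 →
        R '' (Submodule.span ℤ ({v 1, v 2} : Set (EuclideanSpace ℝ (Fin 2))) : Set (EuclideanSpace ℝ (Fin 2)))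
          = (Submodule.span ℤ ({u 1, u 2} : Set (EuclideanSpace ℝ (Fin 2))) : Set (EuclideanSpace ℝ (Fin 2)))) ∧
    ((∀ i, ⟪v i, v i⟫ = ⟪u i, u i⟫) →
      ∃ R : EuclideanSpace ℝ (Fin 2) ≃ₗᵢ[ℝ] EuclideanSpace ℝ (Fin 2),
        ∃ ε : ℝ, (ε = 1 ∨ ε = -1) ∧ ∃ σ : Equiv.Perm (Fin 3),
          (∀ i, R (v i) = ε • u (σ i)) ∧
          R '' (Submodule.span ℤ ({v 1, v 2} : Set (EuclideanSpace ℝ (Fin 2))) : Set (EuclideanSpace ℝ (Fin 2)))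
            = (Submodule.span ℤ ({u 1, u 2} : Set (EuclideanSpace ℝ (Fin 2))) : Set (EuclideanSpace ℝ (Fin 2)))) := by
  have image_span (R : EuclideanSpace ℝ (Fin 2) ≃ₗᵢ[ℝ] EuclideanSpace ℝ (Fin 2))
      (h1 : R (v 1) = u 1) (h2 : R (v 2) = u 2) :
      R '' (Submodule.span ℤ {v 1, v 2} : Set _) = Submodule.span ℤ {u 1, u 2} := by
    rw [image_span_int, Set.image_pair, h1, h2]
  refine ⟨image_span, fun h => ?_⟩
  have h12 : ⟪v 1, v 2⟫ = ⟪u 1, u 2⟫ :=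
    real_inner_eq_of_inner_self_neg_sub_eq (h 1) (h 2) (hv0 ▸ hu0 ▸ h 0)
  have hgram : ∀ i j, ⟪![v 1, v 2] i, ![v 1, v 2] j⟫ = ⟪![u 1, u 2] i, ![u 1, u 2] j⟫ :=
    Fin.forall_fin_two.2 ⟨Fin.forall_fin_two.2 ⟨h 1, h12⟩,
      Fin.forall_fin_two.2 ⟨(real_inner_comm _ _).trans (h12.trans (real_inner_comm _ _)), h 2⟩⟩
  obtain ⟨R, hR⟩ := exists_linearIsometryEquiv_of_inner_eq hvind (by simp) ![u 1, u 2] hgram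
  have hR1 : R (v 1) = u 1 := hR 0
  have hR2 : R (v 2) = u 2 := hR 1
  refine ⟨R, 1, Or.inl rfl, 1, fun i => ?_, image_span R hR1 hR2⟩
  fin_cases i <;> simp [hv0, hu0, hR1, hR2]

/-- Lattices mapped to each other by an orthogonal map, and conversely:
obtuse superbases with equal vonorms give isometric lattices via an orthogonal
map sending each superbase vector to a common sign/permutation of the other. -/
theorem lattice_isometry_of_superbases
    (v u : Fin 3 → EuclideanSpace ℝ (Fin 2))
    (hv0 : v 0 = -v 1 - v 2) (hu0 : u 0 = -u 1 - u 2)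
    (hvind : LinearIndependent ℝ ![v 1, v 2])
    (huind : LinearIndependent ℝ ![u 1, u 2])
    (hvobt : ∀ i j : Fin 3, i ≠ j → ⟪v i, v j⟫ ≤ 0)
    (huobt : ∀ i j : Fin 3, i ≠ j → ⟪u i, u j⟫ ≤ 0) :
    (∀ R : EuclideanSpace ℝ (Fin 2) ≃ₗᵢ[ℝ] EuclideanSpace ℝ (Fin 2),
      R (v 1) = u 1 → R (v 2) = u 2 →
        R '' (Submodule.span ℤ ({v 1, v 2} : Set (EuclideanSpace ℝ (Fin 2))) : Set (EuclideanSpace ℝ (Fin 2)))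
          = (Submodule.span ℤ ({u 1, u 2} : Set (EuclideanSpace ℝ (Fin 2))) : Set (EuclideanSpace ℝ (Fin 2)))) ∧
    ((∀ i, ⟪v i, v i⟫ = ⟪u i, u i⟫) →
      ∃ R : EuclideanSpace ℝ (Fin 2) ≃ₗᵢ[ℝ] EuclideanSpace ℝ (Fin 2),
        ∃ ε : ℝ, (ε = 1 ∨ ε = -1) ∧ ∃ σ : Equiv.Perm (Fin 3),
          (∀ i, R (v i) = ε • u (σ i)) ∧
          R '' (Submodule.span ℤ ({v 1, v 2} : Set (EuclideanSpace ℝ (Fin 2))) : Set (EuclideanSpace ℝ (Fin 2)))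
            = (Submodule.span ℤ ({u 1, u 2} : Set (EuclideanSpace ℝ (Fin 2))) : Set (EuclideanSpace ℝ (Fin 2)))) :=
  lattice_isometry_of_superbases_general v u hv0 hu0 hvind
end

section
/- Let v_1, v_2 generate a lattice Λ in R^2 and let v ∈ Λ be nonzero. Then v is a Voronoi vector of Λ (i.e., the bisector between 0 and v intersects the Voronoi domain of 0) if and only if v has minimal norm in its coset v + 2Λ, i.e., |v| ≤ |v + 2w| for all w ∈ Λ. -/
open RealInnerProductSpace

/-- Voronoi vector criterion: a nonzero lattice vector is a Voronoi vector if
and only if it is a shortest vector in its coset modulo the doubled lattice. -/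
theorem voronoi_vector_criterion (v₁ v₂ : EuclideanSpace ℝ (Fin 2))
    (hind : LinearIndependent ℝ ![v₁, v₂])
    (v : EuclideanSpace ℝ (Fin 2))
    (hv : v ∈ Submodule.span ℤ ({v₁, v₂} : Set (EuclideanSpace ℝ (Fin 2))))
    (hv0 : v ≠ 0) :
    (∃ p : EuclideanSpace ℝ (Fin 2),
        (∀ u ∈ Submodule.span ℤ ({v₁, v₂} : Set (EuclideanSpace ℝ (Fin 2))), ‖p‖ ≤ ‖p - u‖) ∧
        ⟪p, v⟫ = ⟪v, v⟫ / 2) ↔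
    (∀ w ∈ Submodule.span ℤ ({v₁, v₂} : Set (EuclideanSpace ℝ (Fin 2))),
        ‖v‖ ≤ ‖v + (2 : ℝ) • w‖) := by
  constructor
  · rintro ⟨p, hp, hpv⟩ w hw
    have h1 : ‖p‖ ≤ ‖p - (v + w)‖ := hp _ (add_mem hv hw)
    have h2 : ‖p‖ ≤ ‖p - (-w)‖ := hp _ (neg_mem hw)
    have q1 : ‖p‖ ^ 2 ≤ ‖p - (v + w)‖ ^ 2 :=
      pow_le_pow_left₀ (norm_nonneg p) h1 2
    have q2 : ‖p‖ ^ 2 ≤ ‖p - (-w)‖ ^ 2 :=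
      pow_le_pow_left₀ (norm_nonneg p) h2 2
    rw [norm_sub_sq_real] at q1 q2
    rw [inner_add_right] at q1
    rw [inner_neg_right, norm_neg] at q2
    have hvv : ⟪v, v⟫ = ‖v‖ ^ 2 := real_inner_self_eq_norm_sq v
    have hvw : ‖v + w‖ ^ 2 = ‖v‖ ^ 2 + 2 * ⟪v, w⟫ + ‖w‖ ^ 2 := norm_add_sq_real v w
    have hv2w : ‖v + (2:ℝ) • w‖ ^ 2 = ‖v‖ ^ 2 + 2 * ⟪v, (2:ℝ) • w⟫ + ‖(2:ℝ) • w‖ ^ 2 :=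
      norm_add_sq_real v ((2:ℝ) • w)
    rw [real_inner_smul_right, norm_smul] at hv2w
    have key : ‖v‖ ^ 2 ≤ ‖v + (2:ℝ) • w‖ ^ 2 := by
      simp only [Real.norm_ofNat] at hv2w
      nlinarith [hpv, hvv]
    have hn : (0:ℝ) ≤ ‖v + (2:ℝ) • w‖ := norm_nonneg _
    nlinarith [norm_nonneg v]
  · intro h
    refine ⟨(1/2 : ℝ) • v, fun u hu => ?_, ?_⟩
    · have heq : (1/2 : ℝ) • v - u = (1/2 : ℝ) • (v + (2:ℝ) • (-u)) := by
        module
      rw [heq, norm_smul, norm_smul]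
      have := h (-u) (neg_mem hu)
      have h12 : ‖(1/2 : ℝ)‖ = 1/2 := by norm_num [Real.norm_eq_abs]
      rw [h12]
      linarith
    · rw [real_inner_smul_left]; ring
end
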